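/- For any tree T of order at least two, sdim(T) = σ(T) − 1, where σ(T) is the number of leaves of T. -/

import Mathlib

open SimpleGraph

variable {V : Type*} {W : Type*}

/-- `x` lies on some `y`–`z` geodesic in `G`. -/
def LiesOnGeodesic (G : SimpleGraph V) (x y z : V) : Prop :=
  G.dist y x + G.dist x z = G.dist y z

/-- A strong resolving set of `G`. -/
def IsStrongResolvingSet (G : SimpleGraph V) (S : Set V) : Prop :=
  ∀ x y : V, x ≠ y → ∃ z ∈ S,
    LiesOnGeodesic G x y z ∨ LiesOnGeodesic G y x z

/-- The strong metric dimension of a finite graph. -/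
noncomputable def sdim (G : SimpleGraph V) [Fintype V] : ℕ :=
  sInf {n : ℕ | ∃ S : Finset V, S.card = n ∧ IsStrongResolvingSet G ↑S}

/-- `u` is maximally distant from `v` in `G`. -/
def MaxDistFrom (G : SimpleGraph V) (u v : V) : Prop :=
  ∀ w : V, G.Adj u w → G.dist w v ≤ G.dist u v

/-- `u` and `v` are mutually maximally distant in `G`. -/
def MutMaxDist (G : SimpleGraph V) (u v : V) : Prop :=
  MaxDistFrom G u v ∧ MaxDistFrom G v u

/-- The strong resolving graph of `G` (on the full vertex set; vertices not in
any MMD pair are isolated). -/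
def srGraph (G : SimpleGraph V) : SimpleGraph V where
  Adj u v := u ≠ v ∧ MutMaxDist G u v
  symm := by
    constructor
    rintro u v ⟨h, h1, h2⟩
    exact ⟨h.symm, h2, h1⟩
  loopless := by constructor; rintro v ⟨h, -⟩; exact h rfl

/-!
A leaf never lies strictly inside a geodesic, so a pair of distinct leaves can only be
resolved by one of the two leaves themselves: a strong resolving set misses at most one leaf.
Conversely, in a tree every geodesic `x – y` extends beyond `y` to a leaf and beyond `x` to
another leaf; one of these two leaves survives the removal of any single vertex from the set
of leaves, which is therefore still strong resolving after that removal.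
-/

namespace SimpleGraph

variable {G : SimpleGraph V}

def leafFinset (G : SimpleGraph V) [Fintype V] [DecidableRel G.Adj] : Finset V :=
  Finset.univ.filter fun v => G.degree v = 1

theorem isStrongResolvingSet_univ : IsStrongResolvingSet G Set.univ :=
  fun x _ _ => ⟨x, Set.mem_univ x, Or.inl (by simp [LiesOnGeodesic])⟩

theorem sdim_le_card [Fintype V] {S : Finset V} (hS : IsStrongResolvingSet G S) :
    sdim G ≤ S.card :=
  Nat.sInf_le ⟨S, rfl, hS⟩

theorem exists_isStrongResolvingSet_card_eq_sdim [Fintype V] :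
    ∃ S : Finset V, IsStrongResolvingSet G S ∧ S.card = sdim G := by
  have hne : {n | ∃ S : Finset V, S.card = n ∧ IsStrongResolvingSet G ↑S}.Nonempty :=
    ⟨_, Finset.univ, rfl, by simpa using isStrongResolvingSet_univ⟩
  obtain ⟨S, hcard, hS⟩ := Nat.sInf_mem hne
  exact ⟨S, hS, hcard⟩

theorem Connected.dist_eq_dist_add_one_of_degree_eq_one (hG : G.Connected) {x u w : V}
    [Fintype (G.neighborSet x)] (hx : G.degree x = 1) (hxu : G.Adj x u) (hw : w ≠ x) :
    G.dist w x = G.dist w u + 1 := by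
  obtain ⟨p, -, hp⟩ := hG.exists_path_of_dist x w
  have hnil : ¬p.Nil := Walk.not_nil_of_ne hw.symm
  have hsnd : p.snd = u :=
    (degree_eq_one_iff_existsUnique_adj.mp hx).unique (p.adj_snd hnil) hxu
  have hle : G.dist u w + 1 ≤ G.dist x w := by
    rw [← hp, ← Walk.length_tail_add_one hnil, ← hsnd]
    exact Nat.add_le_add_right (dist_le _) 1
  have htri : G.dist w x ≤ G.dist w u + G.dist u x := hG.dist_triangle
  have hux : G.dist u x = 1 := dist_eq_one_iff_adj.mpr hxu.symm
  have hwx : G.dist w x = G.dist x w := dist_comm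
  have hwu : G.dist w u = G.dist u w := dist_comm
  omega

theorem Connected.not_liesOnGeodesic_of_degree_eq_one (hG : G.Connected) {x y z : V}
    [Fintype (G.neighborSet x)] (hx : G.degree x = 1) (hy : y ≠ x) (hz : z ≠ x) :
    ¬LiesOnGeodesic G x y z := by
  obtain ⟨u, hxu, -⟩ := degree_eq_one_iff_existsUnique_adj.mp hx
  have hyx := hG.dist_eq_dist_add_one_of_degree_eq_one hx hxu hy
  have hzx := hG.dist_eq_dist_add_one_of_degree_eq_one hx hxu hz
  have htri : G.dist y z ≤ G.dist y u + G.dist u z := hG.dist_triangle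
  have hxz : G.dist x z = G.dist z x := dist_comm
  have huz : G.dist u z = G.dist z u := dist_comm
  unfold LiesOnGeodesic
  omega

theorem IsStrongResolvingSet.mem_or_mem_of_degree_eq_one [G.LocallyFinite] {S : Set V}
    (hS : IsStrongResolvingSet G S) (hG : G.Connected) {a b : V} (ha : G.degree a = 1)
    (hb : G.degree b = 1) (hab : a ≠ b) : a ∈ S ∨ b ∈ S := by
  obtain ⟨z, hzS, h | h⟩ := hS a b hab
  · refine .inl ?_
    by_contra haS
    exact hG.not_liesOnGeodesic_of_degree_eq_one ha hab.symm (ne_of_mem_of_not_mem hzS haS) h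
  · refine .inr ?_
    by_contra hbS
    exact hG.not_liesOnGeodesic_of_degree_eq_one hb hab (ne_of_mem_of_not_mem hzS hbS) h

theorem Connected.card_leafFinset_le_card_add_one [Fintype V] [DecidableEq V]
    [DecidableRel G.Adj] (hG : G.Connected) {S : Finset V} (hS : IsStrongResolvingSet G S) :
    (leafFinset G).card ≤ S.card + 1 := by
  have hmissed : (leafFinset G \ S).card ≤ 1 := by
    refine Finset.card_le_one.mpr fun a ha b hb => ?_
    simp only [leafFinset, Finset.mem_sdiff, Finset.mem_filter, Finset.mem_univ, true_and]
      at ha hb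
    by_contra hab
    rcases hS.mem_or_mem_of_degree_eq_one hG ha.1 hb.1 hab with h | h
    exacts [ha.2 h, hb.2 h]
  calc (leafFinset G).card ≤ (leafFinset G \ S).card + S.card :=
        Finset.card_le_card_sdiff_add_card
    _ ≤ S.card + 1 := by omega

theorem IsAcyclic.length_eq_dist_of_isPath (hG : G.IsAcyclic) {u v : V} {p : G.Walk u v}
    (hp : p.IsPath) : p.length = G.dist u v := by
  obtain ⟨q, hq, hql⟩ := p.reachable.exists_path_of_dist
  obtain rfl : p = q := Subtype.mk.inj ((hG.subsingleton_path u v).elim ⟨p, hp⟩ ⟨q, hq⟩)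
  exact hql

theorem IsTree.exists_degree_eq_one_liesOnGeodesic [Fintype V] [DecidableRel G.Adj]
    (hT : G.IsTree) {x y : V} (hxy : x ≠ y) :
    ∃ z, G.degree z = 1 ∧ LiesOnGeodesic G y x z := by
  classical
  obtain ⟨z, hz, hmax⟩ := (Finset.univ.filter (LiesOnGeodesic G y x)).exists_max_image
    (G.dist x) ⟨y, by simp [LiesOnGeodesic]⟩
  simp only [Finset.mem_filter, Finset.mem_univ, true_and] at hz hmax
  refine ⟨z, degree_eq_one_iff_existsUnique_adj.mpr ?_, hz⟩
  have hzx : z ≠ x := by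
    intro h
    have hyx : G.dist y x = G.dist x y := dist_comm
    rw [h, LiesOnGeodesic, dist_self] at hz
    exact hxy (hT.connected.dist_eq_zero_iff.mp (by omega))
  obtain ⟨p, hp, hpl⟩ := hT.connected.exists_path_of_dist z x
  have hnil : ¬p.Nil := Walk.not_nil_of_ne hzx
  refine ⟨p.snd, p.adj_snd hnil, fun w hzw => ?_⟩
  by_contra hw
  -- a neighbour of `z` off the path to `x` would lie beyond `y` and farther from `x` than `z`
  have hwp : w ∉ p.support := fun h => hw (hT.isAcyclic.eq_snd_of_adj_start hp hzw h)
  have hxw : G.dist x w = G.dist x z + 1 := by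
    rw [dist_comm, dist_comm (u := x), ← hpl,
      ← hT.isAcyclic.length_eq_dist_of_isPath (hp.cons hwp (h := hzw.symm)), Walk.length_cons]
  have hyw : G.dist y w ≤ G.dist y z + G.dist z w := hT.connected.dist_triangle
  have hxw' : G.dist x w ≤ G.dist x y + G.dist y w := hT.connected.dist_triangle
  have hzw' : G.dist z w = 1 := dist_eq_one_iff_adj.mpr hzw
  have hw_beyond : LiesOnGeodesic G y x w := by
    unfold LiesOnGeodesic at hz ⊢
    omega
  have := hmax w hw_beyond
  omega

theorem IsTree.isStrongResolvingSet_leafFinset_erase [Fintype V] [DecidableEq V]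
    [DecidableRel G.Adj] (hT : G.IsTree) (v : V) :
    IsStrongResolvingSet G ↑((leafFinset G).erase v) := by
  intro x y hxy
  obtain ⟨z₁, hz₁, hxyz₁⟩ := hT.exists_degree_eq_one_liesOnGeodesic hxy
  obtain ⟨z₂, hz₂, hyxz₂⟩ := hT.exists_degree_eq_one_liesOnGeodesic hxy.symm
  have hz : z₁ ≠ z₂ := by
    rintro rfl
    unfold LiesOnGeodesic at hxyz₁ hyxz₂
    rw [dist_comm] at hyxz₂
    exact hxy (hT.connected.dist_eq_zero_iff.mp (by omega))
  by_cases hv : z₁ = v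
  · exact ⟨z₂, by simp [leafFinset, hz₂, ← hv, hz.symm], .inl hyxz₂⟩
  · exact ⟨z₁, by simp [leafFinset, hz₁, hv], .inr hxyz₁⟩

end SimpleGraph

theorem sdim_tree_general [Fintype V] (G : SimpleGraph V)
    [DecidableRel G.Adj] (hG : G.Connected) (hac : G.IsAcyclic)
    (hn : 2 ≤ Fintype.card V) :
    sdim G = (Finset.univ.filter fun v => G.degree v = 1).card - 1 := by
  classical
  change sdim G = (leafFinset G).card - 1
  have hT : G.IsTree := ⟨hG, hac⟩
  have : Nontrivial V := Fintype.one_lt_card_iff_nontrivial.mp hn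
  obtain ⟨l, hl⟩ := hT.exists_vert_degree_one_of_nontrivial
  obtain ⟨S, hS, hcard⟩ := G.exists_isStrongResolvingSet_card_eq_sdim
  refine le_antisymm ?_ ?_
  · calc sdim G ≤ ((leafFinset G).erase l).card :=
          sdim_le_card (hT.isStrongResolvingSet_leafFinset_erase l)
      _ = (leafFinset G).card - 1 := Finset.card_erase_of_mem (by simpa [leafFinset] using hl)
  · have := hG.card_leafFinset_le_card_add_one hS
    omega

theorem sdim_tree [Fintype V] [DecidableEq V] (G : SimpleGraph V)
    [DecidableRel G.Adj] (hG : G.Connected) (hac : G.IsAcyclic)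
    (hn : 2 ≤ Fintype.card V) :
    sdim G = (Finset.univ.filter fun v => G.degree v = 1).card - 1 :=
  sdim_tree_general G hG hac hn
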